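/- Let κ be an uncountable regular cardinal and λ a cardinal with ω ≤ λ ≤ 2^κ. Then there exists a 𝓒-independent family of cardinality λ on κ: a family of λ subsets of κ all of whose finite Boolean combinations are stationary. -/

import Mathlib

open Cardinal

/-- `C` is a club (closed unbounded) subset of the ordinal `o`. -/
def IsClubIn (C : Set Ordinal) (o : Ordinal) : Prop :=
  C ⊆ Set.Iio o ∧ (∀ a < o, ∃ b ∈ C, a ≤ b) ∧
    (∀ a < o, a ≠ 0 → (∀ b < a, ∃ c ∈ C, b < c ∧ c < a) → a ∈ C)

/-- `S` is a stationary subset of the ordinal `o`: it meets every club in `o`. -/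
def IsStationaryIn (S : Set Ordinal) (o : Ordinal) : Prop :=
  S ⊆ Set.Iio o ∧ ∀ C, IsClubIn C o → (S ∩ C).Nonempty

/-!
Split `κ` into `κ` pairwise disjoint stationary sets `T x`: when `κ = ν⁺` by an Ulam matrix
(each ordinal below `κ` injects into `ν`, and a stationary set is not covered by `ν`
nonstationary ones), and when `κ` is a limit cardinal by the sets of points of a fixed regular
cofinality `μ < κ`. Hausdorff's construction on the `κ` pairs `(F, G)`, `F` finite and `G` a
finite set of finite sets, gives `2^κ` sets `A X = {(F, G) | F ∩ X ∈ G}` whose finite Boolean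
combinations are all nonempty. The sets `⋃ x ∈ A X, T x` are then `𝓒`-independent: a Boolean
combination of them contains `T x` for every `x` in the same combination of the `A X`.
-/

open Set Order Function

universe u

section Independent

variable {σ : Type*}

open Classical in
def hausdorffFamily (X : Set σ) : Set (Finset σ × Finset (Finset σ)) :=
  {d | d.1.filter (· ∈ X) ∈ d.2}

theorem exists_mem_hausdorffFamily (S T : Finset (Set σ)) (hST : Disjoint S T) :
    ∃ d, (∀ X ∈ S, d ∈ hausdorffFamily X) ∧ ∀ Y ∈ T, d ∉ hausdorffFamily Y := by
  classical
  have hsep : ∀ X ∈ S, ∀ Y ∈ T, ∃ a, ¬(a ∈ X ↔ a ∈ Y) := fun X hX Y hY => by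
    by_contra! h
    exact Finset.disjoint_left.1 hST hX (Set.ext h ▸ hY)
  choose sep hsep using hsep
  set F := S.attach.biUnion fun X => T.attach.image fun Y => sep X.1 X.2 Y.1 Y.2
  refine ⟨(F, S.image fun X => F.filter (· ∈ X)), fun X hX => ?_, ?_⟩
  · exact Finset.mem_image_of_mem (fun X => F.filter (· ∈ X)) hX
  · rintro Y hY hmem
    obtain ⟨X, hX, hXY⟩ := Finset.mem_image.1 hmem
    have ha : sep X hX Y hY ∈ F := Finset.mem_biUnion.2
      ⟨⟨X, hX⟩, Finset.mem_attach _ _, Finset.mem_image_of_mem _ (Finset.mem_attach _ ⟨Y, hY⟩)⟩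
    have := congrArg (sep X hX Y hY ∈ ·) hXY
    simp only [Finset.mem_filter, ha, true_and, eq_iff_iff] at this
    exact hsep X hX Y hY this

theorem mk_finset_prod_finset_finset [Infinite σ] :
    #(Finset σ × Finset (Finset σ)) = #σ := by
  simp [mk_finset_of_infinite]

theorem exists_independent_family [Infinite σ] :
    ∃ A : Set σ → Set σ, ∀ S T : Finset (Set σ), Disjoint S T →
      ∃ x, (∀ X ∈ S, x ∈ A X) ∧ ∀ Y ∈ T, x ∉ A Y := by
  obtain ⟨e⟩ := Cardinal.eq.1 (mk_finset_prod_finset_finset (σ := σ))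
  refine ⟨fun X => e.symm ⁻¹' hausdorffFamily X, fun S T hST => ?_⟩
  obtain ⟨d, hS, hT⟩ := exists_mem_hausdorffFamily S T hST
  exact ⟨e d, by simpa using hS, by simpa using hT⟩

end Independent

theorem Cardinal.le_mk_range_of_mk_preimage_lt {β γ : Type u} (f : β → γ)
    (hβ : (#β).IsRegular) (h : ∀ c, #(f ⁻¹' {c}) < #β) : #β ≤ #(range f) := by
  by_contra! hlt
  obtain ⟨c, hc⟩ := infinite_pigeonhole_card (rangeFactorization f) #β le_rfl hβ.aleph0_le
    (by rwa [hβ.cof_ord])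
  have hfib : rangeFactorization f ⁻¹' {c} = f ⁻¹' {c.1} := by
    ext; simp [rangeFactorization, Subtype.ext_iff]
  exact (h c).not_ge (hfib ▸ hc)

section WellOrder

variable {α : Type*} [LinearOrder α]

theorem Order.IsNormal.cof_Iio_apply {f : α → α} (hf : IsNormal f) {x : α} (hx : IsSuccLimit x) :
    Order.cof (Iio (f x)) = Order.cof (Iio x) := by
  refine (cof_congr_of_strictMono (f := fun y : Iio x => (⟨f y, hf.strictMono y.2⟩ : Iio (f x)))
    (fun y z h => hf.strictMono h) ?_).symm
  rintro ⟨b, hb⟩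
  obtain ⟨y, hy, hby⟩ := (hf.lt_iff_exists_lt hx).1 hb
  exact ⟨_, mem_range_self ⟨y, hy⟩, hby.le⟩

theorem isSuccLimit_of_one_lt_cof_Iio [WellFoundedLT α] {x : α} (hx : 1 < Order.cof (Iio x)) :
    IsSuccLimit x := by
  rw [← (Ordinal.typein (α := α) (· < ·)).isSuccLimit_apply_iff, ← Ordinal.one_lt_cof_iff,
    ← Order.cof_Iio]
  exact hx

theorem isStationary_Ioi [NoMaxOrder α] (a : α) : IsStationary (Ioi a) := by
  refine .of_not_isCofinal_compl fun h => ?_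
  obtain ⟨b, hab⟩ := exists_gt a
  obtain ⟨c, hc, hbc⟩ := h b
  exact (hab.trans_le hbc).not_ge (not_lt.1 hc)

variable [WellFoundedLT α] [IsRegularCardinalOrder α]

theorem isStationary_setOf_cof_Iio_eq {x : α} (hx : IsSuccLimit x) :
    IsStationary {a : α | Order.cof (Iio a) = Order.cof (Iio x)} := by
  intro t ht
  exact ⟨(enum t ht.isCofinal x : α), ht.isNormal_enum.cof_Iio_apply hx, (enum t ht.isCofinal x).2⟩

theorem isRegular_cardinalMk (hα : ℵ₀ ≤ #α) : (#α).IsRegular :=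
  ⟨hα, by rw [ord_cardinalMk, Ordinal.cof_type, cof_eq_cardinalMk]⟩

theorem exists_pairwise_disjoint_isStationary_of_eq_succ {ν : Cardinal} (hν : #α = succ ν)
    (hα : ℵ₀ < #α) : ∃ (s : Set α) (T : s → Set α),
      #α ≤ #s ∧ (∀ i, IsStationary (T i)) ∧ Pairwise (Disjoint on T) := by
  have hcof : Order.cof α = #α := cof_eq_cardinalMk
  have : Nonempty α := mk_ne_zero_iff.1 (aleph0_pos.trans hα).ne'
  have : NoMaxOrder α := by
    rw [← noTopOrder_iff_noMaxOrder, ← one_lt_cof_iff, hcof]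
    exact one_lt_aleph0.trans hα
  have e (a : α) : Iio a ↪ ν.out := Classical.choice <| (le_def _ _).1 <| by
    rw [mk_out, ← lt_succ_iff, ← hν]
    exact mk_Iio_lt a ord_cardinalMk
  -- Ulam matrix: for fixed `ξ` the sets `A ξ b` are disjoint, as each `e a` is injective
  let A (ξ : ν.out) (b : α) : Set α := {a | ∃ h : b < a, e a ⟨b, h⟩ = ξ}
  have hA (b : α) : ∃ ξ, IsStationary (A ξ b) := by
    refine (isStationary_iUnion_iff (by rw [hcof]; exact hα.ne') ?_).1 <|
      (isStationary_Ioi b).mono fun a hab => mem_iUnion.2 ⟨_, hab, rfl⟩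
    simp [hν]
  choose F hF using hA
  obtain ⟨ξ, hξ⟩ := infinite_pigeonhole_card_lt F (by rw [mk_out, hν]; exact lt_succ ν) hα.le
  refine ⟨F ⁻¹' {ξ}, fun b => A ξ b, hν ▸ succ_le_of_lt ((mk_out ν).symm.trans_lt hξ), fun b => ?_,
    fun b b' hne => disjoint_left.2 ?_⟩
  · obtain ⟨b, hb : F b = ξ⟩ := b
    subst hb
    exact hF b
  · rintro a ⟨h, ha⟩ ⟨h', ha'⟩
    exact hne (Subtype.ext (congrArg Subtype.val ((e a).injective (ha.trans ha'.symm)) :))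

theorem exists_pairwise_disjoint_isStationary_of_isSuccPrelimit (hlim : IsSuccPrelimit #α)
    (hα : ℵ₀ < #α) : ∃ (s : Set α) (T : s → Set α),
      #α ≤ #s ∧ (∀ i, IsStationary (T i)) ∧ Pairwise (Disjoint on T) := by
  -- `x a` has cofinality `μ a`; as `a < x a`, the fibres of `x` are small
  let μ (a : α) : Cardinal := succ (ℵ₀ ⊔ #(Iio a))
  have hμ (a : α) : (μ a).IsRegular := isRegular_succ le_sup_left
  have hx (a : α) : ∃ x : α, Ordinal.typein (α := α) (· < ·) x = (μ a).ord :=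
    Ordinal.typein_surj (α := α) (· < ·) <| by
      rw [← ord_cardinalMk (α := α), ord_lt_ord]
      exact hlim.succ_lt (max_lt hα (mk_Iio_lt a ord_cardinalMk))
  choose x hx using hx
  have hcof (a : α) : Order.cof (Iio (x a)) = μ a := by
    rw [Order.cof_Iio, hx, (hμ a).cof_ord]
  have hlt (a : α) : a < x a := by
    rw [← (Ordinal.typein (α := α) (· < ·)).lt_iff_lt, hx, lt_ord, Ordinal.card_typein]
    exact (le_sup_right.trans_lt (lt_succ _))
  refine ⟨range x, fun y => {b | Order.cof (Iio b) = Order.cof (Iio y.1)}, ?_, ?_, ?_⟩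
  · refine le_mk_range_of_mk_preimage_lt x (isRegular_cardinalMk hα.le) fun y => ?_
    refine (mk_le_mk_of_subset fun a (ha : x a = y) => ?_).trans_lt (mk_Iio_lt y ord_cardinalMk)
    exact ha ▸ hlt a
  · rintro ⟨_, a, rfl⟩
    refine isStationary_setOf_cof_Iio_eq (isSuccLimit_of_one_lt_cof_Iio ?_)
    rw [hcof]
    exact one_lt_aleph0.trans_le (le_sup_left.trans (le_succ _))
  · rintro ⟨_, a, rfl⟩ ⟨_, a', rfl⟩ hne
    refine disjoint_left.2 fun b hb hb' => hne (Subtype.ext ?_)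
    refine Ordinal.typein_injective (α := α) (· < ·) ?_
    rw [hx, hx, ← hcof, ← hcof]
    exact congrArg ord (hb.symm.trans hb')

theorem exists_pairwise_disjoint_isStationary (hα : ℵ₀ < #α) :
    ∃ T : α → Set α, (∀ a, IsStationary (T a)) ∧ Pairwise (Disjoint on T) := by
  obtain ⟨s, T, hs, hT, hdisj⟩ : ∃ (s : Set α) (T : s → Set α),
      #α ≤ #s ∧ (∀ i, IsStationary (T i)) ∧ Pairwise (Disjoint on T) := by
    by_cases hlim : IsSuccPrelimit #α
    · exact exists_pairwise_disjoint_isStationary_of_isSuccPrelimit hlim hα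
    · obtain ⟨ν, -, hν⟩ := not_isSuccPrelimit_iff_succ_eq.1 hlim
      exact exists_pairwise_disjoint_isStationary_of_eq_succ hν.symm hα
  obtain ⟨g⟩ := (le_def _ _).1 hs
  exact ⟨T ∘ g, fun a => hT (g a), hdisj.comp_of_injective g.injective⟩

theorem exists_isStationary_independent_family (hα : ℵ₀ < #α) :
    ∃ B : Set α → Set α, ∀ S R : Finset (Set α), Disjoint S R →
      IsStationary ((⋂ X ∈ S, B X) \ ⋃ Y ∈ R, B Y) := by
  have : Infinite α := infinite_iff.2 hα.le
  obtain ⟨T, hT, hdisj⟩ := exists_pairwise_disjoint_isStationary hα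
  obtain ⟨A, hA⟩ := exists_independent_family (σ := α)
  refine ⟨fun X => ⋃ x ∈ A X, T x, fun S R hSR => ?_⟩
  obtain ⟨x, hS, hR⟩ := hA S R hSR
  refine (hT x).mono fun y hy => ⟨mem_iInter₂.2 fun X hX => mem_biUnion (hS X hX) hy, ?_⟩
  simp only [mem_iUnion, not_exists]
  intro Y hY z hz hyz
  exact disjoint_left.1 (hdisj (show x ≠ z from fun h => hR Y hY (h ▸ hz))) hy hyz

end WellOrder

theorem IsClubIn.isClub_preimage_val {o : Ordinal} {C : Set Ordinal} (hC : IsClubIn C o) :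
    IsClub (Subtype.val ⁻¹' C : Set (Iio o)) := by
  refine ⟨fun d hdC hd _ a ha => ?_, fun a => ?_⟩
  · by_cases had : a ∈ d
    · exact hdC had
    have hlt {c} (hc : c ∈ d) : c < a := (ha.1 hc).lt_of_ne fun h => had (h ▸ hc)
    refine hC.2.2 a a.2 ?_ fun b hb => ?_
    · obtain ⟨c, hc⟩ := hd
      exact ((zero_le).trans_lt (show c.1 < a.1 from hlt hc)).ne'
    · obtain ⟨c, hcd, hbc⟩ : ∃ c ∈ d, (⟨b, hb.trans a.2⟩ : Iio o) < c := by
        by_contra! h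
        exact (ha.2 h).not_gt hb
      exact ⟨c, hdC hcd, hbc, hlt hcd⟩
  · obtain ⟨b, hb, hab⟩ := hC.2.1 a a.2
    exact ⟨⟨b, hC.1 hb⟩, hb, hab⟩

theorem isStationaryIn_of_isStationary_preimage_val {o : Ordinal} {S : Set Ordinal}
    (hS : S ⊆ Iio o) (h : IsStationary (Subtype.val ⁻¹' S : Set (Iio o))) :
    IsStationaryIn S o := by
  refine ⟨hS, fun C hC => ?_⟩
  obtain ⟨a, haS, haC⟩ := h hC.isClub_preimage_val
  exact ⟨a, haS, haC⟩

theorem isRegularCardinalOrder_Iio_ord {κ : Cardinal} (hκ : κ.IsRegular) :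
    IsRegularCardinalOrder (Iio κ.ord) :=
  ⟨by rw [Ordinal.type_lt_Iio, Ordinal.cof_Iio, ← Ordinal.lift_cof, hκ.cof_ord, lift_ord]⟩

theorem biInter_diff_biUnion_of_subset_range {ι β : Type*} {B : ι → Set β} {P : Set β → Prop}
    (h : ∀ S T : Finset ι, Disjoint S T → P ((⋂ i ∈ S, B i) \ ⋃ i ∈ T, B i))
    (S T : Finset (Set β)) (hS : ↑S ⊆ range B) (hT : ↑T ⊆ range B) (hST : Disjoint S T) :
    P ((⋂ I ∈ S, I) \ ⋃ I ∈ T, I) := by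
  classical
  rw [← image_univ] at hS hT
  obtain ⟨S', -, rfl⟩ := Finset.subset_set_image_iff.1 hS
  obtain ⟨T', -, rfl⟩ := Finset.subset_set_image_iff.1 hT
  simpa [Finset.set_biInter_finset_image, Finset.set_biUnion_finset_image] using
    h S' T' hST.of_image_finset

theorem exists_club_independent_of_card_general (κ l : Cardinal.{0})
    (hreg : κ.IsRegular) (hu : ℵ₀ < κ) (hl2 : l ≤ 2 ^ κ) :
    ∃ 𝓘 : Set (Set Ordinal.{0}), (∀ I ∈ 𝓘, I ⊆ Set.Iio κ.ord) ∧
      #𝓘 = Cardinal.lift.{1} l ∧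
      ∀ S T : Finset (Set Ordinal.{0}), ↑S ⊆ 𝓘 → ↑T ⊆ 𝓘 → Disjoint S T →
        IsStationaryIn ((Set.Iio κ.ord ∩ ⋂ I ∈ S, I) \ ⋃ I ∈ T, I) κ.ord := by
  have := isRegularCardinalOrder_Iio_ord hreg
  have hmk : #(Iio κ.ord) = lift κ := by rw [mk_Iio_ordinal, card_ord]
  obtain ⟨B, hB⟩ := exists_isStationary_independent_family (α := Iio κ.ord)
    (by simpa [hmk])
  have hBinj : Injective B := fun X Y hXY => by_contra fun hne => by
    simpa [hXY] using (hB {X} {Y} (by simpa using hne)).nonempty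
  let B' (X : Set (Iio κ.ord)) : Set Ordinal := Subtype.val '' B X
  obtain ⟨𝒴, h𝒴⟩ : ∃ 𝒴 : Set (Set (Iio κ.ord)), #𝒴 = lift l := le_mk_iff_exists_set.1 <| by
    rw [mk_set, hmk, ← lift_two.{1, 0}, ← lift_power]
    exact lift_le.2 hl2
  refine ⟨B' '' 𝒴, ?_, ?_, fun S T hS hT hST => ?_⟩
  · rintro _ ⟨X, -, rfl⟩
    exact image_subset_range _ _ |>.trans Subtype.range_coe.subset
  · rw [mk_image_eq (f := B') ((image_injective.2 Subtype.val_injective).comp hBinj), h𝒴]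
  · rw [inter_sdiff_assoc]
    refine biInter_diff_biUnion_of_subset_range (P := fun W => IsStationaryIn (Iio κ.ord ∩ W) κ.ord)
      (fun S' T' hST' => ?_) S T (hS.trans (image_subset_range _ _))
      (hT.trans (image_subset_range _ _)) hST
    refine isStationaryIn_of_isStationary_preimage_val inter_subset_left ?_
    simpa [B', preimage_iInter₂, preimage_iUnion₂] using hB S' T' hST'

/-- on an uncountable regular `κ`, for every `λ` with `ω ≤ λ ≤ 2^κ`
there is a `𝓒`-independent family of cardinality `λ`: all finite Boolean combinations
are stationary in `κ`. -/
theorem exists_club_independent_of_card (κ l : Cardinal.{0})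
    (hreg : κ.IsRegular) (hu : ℵ₀ < κ) (hl1 : ℵ₀ ≤ l) (hl2 : l ≤ 2 ^ κ) :
    ∃ 𝓘 : Set (Set Ordinal.{0}), (∀ I ∈ 𝓘, I ⊆ Set.Iio κ.ord) ∧
      #𝓘 = Cardinal.lift.{1} l ∧
      ∀ S T : Finset (Set Ordinal.{0}), ↑S ⊆ 𝓘 → ↑T ⊆ 𝓘 → Disjoint S T →
        IsStationaryIn ((Set.Iio κ.ord ∩ ⋂ I ∈ S, I) \ ⋃ I ∈ T, I) κ.ord :=
  exists_club_independent_of_card_general κ l hreg hu hl2
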